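/- At zero momentum (p = q = 0), the absolute BRST cohomology of Ab(0,0) is: H^1 is two-dimensional, spanned by the classes of A_0^0 and A_0^1; H^2 is two-dimensional, spanned by the classes of B_0 and C_0; and H^g(Ab(0,0)) = 0 for every integer g ∉ {1,2}. Thus, unlike the relative zero-momentum cohomology, the absolute zero-momentum cohomology in the (−1,0) picture is nonzero only at ghost numbers one and two. -/

import Mathlib

/-!
Massless relative BRST complex of the N=2 string in the (−1,0) picture.

Basis: for each N ≥ 0, `A N 0`, `A N 1` in degree 2N+1 and `B N`, `C N` in
degree 2N+2.  Momenta `p q : Fin 2 → ℂ` correspond to (p⁰,p¹) and (q₀,q₁).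
The BRST differential acts by
  Q A_N^0 = 2p⁰ B_N − q₁ C_N,
  Q A_N^1 = 2p¹ B_N + q₀ C_N,
  Q B_N   = q₀ A_{N+1}^0 + q₁ A_{N+1}^1,
  Q C_N   = 2p⁰ A_{N+1}^1 − 2p¹ A_{N+1}^0.
-/

/-- Basis of the relative complex `R(p,q)`. -/
inductive RB where
  | A : ℕ → Fin 2 → RB
  | B : ℕ → RB
  | C : ℕ → RB

/-- The underlying vector space of the complex `R(p,q)`: formal ℂ-linear
combinations of basis vectors. -/
abbrev RSpace : Type := RB →₀ ℂ

/-- The ghost-number degree of a basis vector. -/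
def RB.deg : RB → ℤ
  | .A N _ => 2 * (N : ℤ) + 1
  | .B N => 2 * (N : ℤ) + 2
  | .C N => 2 * (N : ℤ) + 2

/-- The degree-`g` graded piece `R^g` (the span of the basis vectors of
degree `g`); it is `0` for `g ≤ 0`. -/
noncomputable def Rdeg (g : ℤ) : Submodule ℂ RSpace :=
  Finsupp.supported ℂ ℂ {b : RB | RB.deg b = g}

open Finsupp in
/-- The BRST differential `Q` of `R(p,q)`. -/
noncomputable def Qmap (p q : Fin 2 → ℂ) : RSpace →ₗ[ℂ] RSpace :=
  Finsupp.lift RSpace ℂ RB fun b => match b with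
    | .A N μ =>
        (2 * p μ) • single (RB.B N) (1 : ℂ)
          + (if μ = 0 then -(q 1) else q 0) • single (RB.C N) (1 : ℂ)
    | .B N =>
        q 0 • single (RB.A (N + 1) 0) (1 : ℂ)
          + q 1 • single (RB.A (N + 1) 1) (1 : ℂ)
    | .C N =>
        (2 * p 0) • single (RB.A (N + 1) 1) (1 : ℂ)
          - (2 * p 1) • single (RB.A (N + 1) 0) (1 : ℂ)

/-- The state `q·A_N = q₀ A_N^0 + q₁ A_N^1`. -/
noncomputable def qA (q : Fin 2 → ℂ) (N : ℕ) : RSpace :=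
  q 0 • Finsupp.single (RB.A N 0) (1 : ℂ) + q 1 • Finsupp.single (RB.A N 1) (1 : ℂ)

/-- Degree-`g` cocycles: `ker Q ∩ R^g`. -/
noncomputable def Zg (p q : Fin 2 → ℂ) (g : ℤ) : Submodule ℂ RSpace :=
  Rdeg g ⊓ LinearMap.ker (Qmap p q)

/-- Degree-`g` coboundaries: `Q(R^{g-1})`. -/
noncomputable def Bg (p q : Fin 2 → ℂ) (g : ℤ) : Submodule ℂ RSpace :=
  (Rdeg (g - 1)).map (Qmap p q)

/-- The relative BRST cohomology `H^g(R(p,q)) = (ker Q ∩ R^g)/Q(R^{g-1})`,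
realised as the image of the cocycles `Z^g` in the quotient of the whole space
by the coboundaries `B^g = Q(R^{g-1})`. -/
noncomputable def Hco (p q : Fin 2 → ℂ) (g : ℤ) :
    Submodule ℂ (RSpace ⧸ Bg p q g) :=
  (Zg p q g).map (Bg p q g).mkQ
/-!
The absolute complex `Ab(p,q) := R ⊕ c₀R`.  An element is a pair `(x, y)`
representing `x + c₀ y` with `x, y ∈ R`.  The degree-`g` part is
`R^g ⊕ c₀ R^{g-1}`.  The shift operator `S` has degree `+2` and sends each
basis vector at level `N` to the corresponding one at level `N+1`, and the
differential is extended by `Q(c₀ y) = −4 S y − c₀ (Q y)`.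
-/

/-- The level shift `N ↦ N + 1` on basis vectors. -/
def RB.shift : RB → RB
  | .A N μ => .A (N + 1) μ
  | .B N => .B (N + 1)
  | .C N => .C (N + 1)

/-- The degree `+2` map `S` with `S A_N^μ = A_{N+1}^μ`, `S B_N = B_{N+1}`,
`S C_N = C_{N+1}`. -/
noncomputable def Smap : RSpace →ₗ[ℂ] RSpace :=
  Finsupp.lmapDomain ℂ ℂ RB.shift

/-- The underlying space of the absolute complex `Ab(p,q) = R ⊕ c₀R`:
the pair `(x, y)` represents `x + c₀ y`. -/
abbrev AbSpace : Type := RSpace × RSpace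

/-- The degree-`g` graded piece `Ab^g = R^g ⊕ c₀ R^{g-1}`. -/
noncomputable def AbDeg (g : ℤ) : Submodule ℂ AbSpace :=
  (Rdeg g).prod (Rdeg (g - 1))

/-- The BRST differential on the absolute complex:
`Q (x + c₀ y) = (Q x − 4 S y) − c₀ (Q y)`. -/
noncomputable def QAb (p q : Fin 2 → ℂ) : AbSpace →ₗ[ℂ] AbSpace :=
  LinearMap.prod
    ((Qmap p q) ∘ₗ (LinearMap.fst ℂ RSpace RSpace)
      - (4 : ℂ) • (Smap ∘ₗ (LinearMap.snd ℂ RSpace RSpace)))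
    (- ((Qmap p q) ∘ₗ (LinearMap.snd ℂ RSpace RSpace)))

/-- Degree-`g` cocycles of the absolute complex. -/
noncomputable def AbZ (p q : Fin 2 → ℂ) (g : ℤ) : Submodule ℂ AbSpace :=
  AbDeg g ⊓ LinearMap.ker (QAb p q)

/-- Degree-`g` coboundaries of the absolute complex: `Q(Ab^{g-1})`. -/
noncomputable def AbB (p q : Fin 2 → ℂ) (g : ℤ) : Submodule ℂ AbSpace :=
  (AbDeg (g - 1)).map (QAb p q)

/-- The absolute BRST cohomology
`H^g(Ab(p,q)) = (ker Q ∩ Ab^g)/Q(Ab^{g-1})`, realised as the image of the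
cocycles in the quotient by the coboundaries. -/
noncomputable def HAb (p q : Fin 2 → ℂ) (g : ℤ) :
    Submodule ℂ (AbSpace ⧸ AbB p q g) :=
  (AbZ p q g).map (AbB p q g).mkQ

/-!
At zero momentum `Q` vanishes on `R`, so on `Ab` it is `x + c₀ y ↦ −4 S y`. Since `S` is
injective, the degree-`g` cocycles are exactly `R^g`, and the coboundaries are `S(R^{g−2})`.
Every basis vector of degree `≥ 3` is a shift, so `S(R^{g−2}) = R^g` for `g ≥ 3`, while
`R^g = 0` for `g ≤ 0`; hence `H^g = 0` off `{1, 2}`. For `g ∈ {1, 2}` there are no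
coboundaries at all, and `H^g ≅ R^g` has the two basis vectors of degree `g` as a basis.
-/

open Finsupp Submodule

theorem Submodule.finrank_eq_two_and_span_subtype_eq_top {K V : Type*} [DivisionRing K]
    [AddCommGroup V] [Module K V] {v₀ v₁ : V} (hli : LinearIndependent K ![v₀, v₁])
    {P : Submodule K V} (hP : P = span K {v₀, v₁}) (h₀ : v₀ ∈ P) (h₁ : v₁ ∈ P) :
    Module.finrank K P = 2 ∧ span K {(⟨v₀, h₀⟩ : P), ⟨v₁, h₁⟩} = ⊤ := by
  subst hP
  constructor
  · rw [← Matrix.range_cons_cons_empty, finrank_span_eq_card hli, Fintype.card_fin]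
  · apply map_injective_of_injective (span K {v₀, v₁}).injective_subtype
    rw [map_span, map_top, range_subtype, Set.image_pair]
    rfl

theorem RB.one_le_deg (b : RB) : 1 ≤ b.deg := by
  cases b <;> simp only [RB.deg] <;> omega

theorem Rdeg_eq_bot {g : ℤ} (hg : g ≤ 0) : Rdeg g = ⊥ := by
  rw [Rdeg, ← supported_empty]
  congr 1
  ext b
  simp only [Set.mem_ofPred_eq, Set.mem_empty_iff_false, iff_false]
  have := b.one_le_deg
  omega

theorem Rdeg_eq_span_pair {g : ℤ} {b₀ b₁ : RB} (h : {b : RB | b.deg = g} = {b₀, b₁}) :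
    Rdeg g = span ℂ {single b₀ 1, single b₁ 1} := by
  rw [Rdeg, h, supported_eq_span_single, Set.image_pair]

theorem RB.setOf_deg_eq_one : {b : RB | b.deg = 1} = {.A 0 0, .A 0 1} := by
  ext (⟨N, μ⟩ | N | N) <;> simp [RB.deg]
  · fin_cases μ <;> simp
  all_goals omega

theorem RB.setOf_deg_eq_two : {b : RB | b.deg = 2} = {.B 0, .C 0} := by
  ext (⟨N, μ⟩ | N | N) <;> simp [RB.deg]
  omega

theorem RB.deg_shift (b : RB) : b.shift.deg = b.deg + 2 := by
  cases b <;> simp only [RB.deg, RB.shift] <;> push_cast <;> ring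

theorem RB.shift_injective : Function.Injective RB.shift := by
  rintro (⟨_, _⟩ | _ | _) (⟨_, _⟩ | _ | _) h <;> simp_all [RB.shift]

theorem RB.exists_shift_eq {b : RB} (hb : 3 ≤ b.deg) : ∃ a : RB, a.shift = b := by
  rcases b with ⟨_ | N, μ⟩ | (_ | N) | (_ | N)
  exacts [by norm_num [RB.deg] at hb, ⟨.A N μ, rfl⟩, by norm_num [RB.deg] at hb, ⟨.B N, rfl⟩,
    by norm_num [RB.deg] at hb, ⟨.C N, rfl⟩]

theorem RB.shift_image_setOf_deg {g : ℤ} (hg : 3 ≤ g) :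
    RB.shift '' {b | b.deg = g - 2} = {b | b.deg = g} := by
  ext b
  simp only [Set.mem_image, Set.mem_ofPred_eq]
  constructor
  · rintro ⟨a, ha, rfl⟩
    rw [RB.deg_shift]
    omega
  · rintro rfl
    obtain ⟨a, rfl⟩ := RB.exists_shift_eq hg
    exact ⟨a, by rw [RB.deg_shift]; ring, rfl⟩

theorem Smap_injective : Function.Injective Smap :=
  mapDomain_injective RB.shift_injective

theorem map_Smap_Rdeg {g : ℤ} (hg : 3 ≤ g) : (Rdeg (g - 2)).map Smap = Rdeg g := by
  rw [Rdeg, Rdeg, Smap, lmapDomain_supported, RB.shift_image_setOf_deg hg]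

theorem Qmap_zero : Qmap 0 0 = 0 := by
  ext b : 2
  cases b <;> simp [Qmap]

theorem QAb_zero :
    QAb 0 0 = LinearMap.inl ℂ _ _ ∘ₗ (-(4 : ℂ) • Smap) ∘ₗ LinearMap.snd ℂ RSpace RSpace := by
  refine LinearMap.ext fun z => ?_
  simp [QAb, Qmap_zero]

theorem AbZ_zero (g : ℤ) : AbZ 0 0 g = (Rdeg g).prod ⊥ := by
  ext ⟨x, y⟩
  simp only [AbZ, AbDeg, QAb_zero, mem_inf, mem_prod, mem_bot, LinearMap.mem_ker,
    LinearMap.coe_comp, Function.comp_apply, LinearMap.snd_apply, LinearMap.inl_apply,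
    LinearMap.smul_apply, Prod.mk_eq_zero, and_true, smul_eq_zero, neg_eq_zero,
    (by norm_num : (4 : ℂ) ≠ 0), false_or, map_eq_zero_iff Smap Smap_injective]
  constructor
  · rintro ⟨⟨hx, -⟩, rfl⟩
    exact ⟨hx, rfl⟩
  · rintro ⟨hx, rfl⟩
    exact ⟨⟨hx, zero_mem _⟩, rfl⟩

theorem AbB_zero (g : ℤ) : AbB 0 0 g = ((Rdeg (g - 2)).map Smap).prod ⊥ := by
  rw [AbB, QAb_zero, AbDeg, map_comp, map_comp, prod_map_snd,
    Submodule.map_smul _ _ _ (by norm_num : (-4 : ℂ) ≠ 0), map_inl, sub_sub]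
  norm_num

theorem AbB_zero_eq_bot {g : ℤ} (hg : g ≤ 2) : AbB 0 0 g = ⊥ := by
  rw [AbB_zero, Rdeg_eq_bot (by omega), Submodule.map_bot, prod_bot]

theorem HAb_zero_eq_bot {g : ℤ} (hg : g ∉ ({1, 2} : Set ℤ)) : HAb 0 0 g = ⊥ := by
  rw [HAb, eq_bot_iff, map_le_iff_le_comap, comap_bot, ker_mkQ, AbZ_zero]
  rcases le_or_gt g 0 with hg0 | hg0
  · rw [Rdeg_eq_bot hg0, prod_bot]
    exact bot_le
  · have hg3 : 3 ≤ g := by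
      simp only [Set.mem_insert_iff, Set.mem_singleton_iff, not_or] at hg
      omega
    rw [AbB_zero, map_Smap_Rdeg hg3]

theorem HAb_zero_eq_span_pair {g : ℤ} {b₀ b₁ : RB} (h : {b : RB | b.deg = g} = {b₀, b₁}) :
    HAb 0 0 g = span ℂ {(AbB 0 0 g).mkQ (single b₀ 1, 0), (AbB 0 0 g).mkQ (single b₁ 1, 0)} := by
  rw [HAb, AbZ_zero, Rdeg_eq_span_pair h, ← map_inl, map_span, map_span, Set.image_pair,
    Set.image_pair]
  rfl

theorem linearIndependent_HAb_zero_pair {g : ℤ} (hg : g ≤ 2) {b₀ b₁ : RB} (hne : b₀ ≠ b₁) :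
    LinearIndependent ℂ
      ![(AbB 0 0 g).mkQ (single b₀ 1, 0), (AbB 0 0 g).mkQ (single b₁ 1, 0)] := by
  rw [LinearIndependent.pair_iff]
  intro s t hst
  rw [← map_smul, ← map_smul, ← map_add, mkQ_apply, Quotient.mk_eq_zero, AbB_zero_eq_bot hg,
    mem_bot] at hst
  exact ⟨by simpa [hne] using congr(($hst).1 b₀), by simpa [hne.symm] using congr(($hst).1 b₁)⟩

/-- At zero momentum (`p = q = 0`), the absolute BRST
cohomology of `Ab(0,0)` is: `H^1` is two-dimensional, spanned by the classes
of `A_0^0` and `A_0^1`; `H^2` is two-dimensional, spanned by the classes of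
`B_0` and `C_0`; and `H^g(Ab(0,0)) = 0` for every integer `g ∉ {1, 2}`.
Thus, unlike the relative zero-momentum cohomology, the absolute zero-momentum
cohomology in the (−1,0) picture is nonzero only at ghost numbers one and
two. -/
theorem zero_momentum_absolute_cohomology
    (hm1 : (AbB 0 0 1).mkQ ((Finsupp.single (RB.A 0 0) (1 : ℂ), 0) : AbSpace)
      ∈ HAb 0 0 1)
    (hm2 : (AbB 0 0 1).mkQ ((Finsupp.single (RB.A 0 1) (1 : ℂ), 0) : AbSpace)
      ∈ HAb 0 0 1)
    (hm3 : (AbB 0 0 2).mkQ ((Finsupp.single (RB.B 0) (1 : ℂ), 0) : AbSpace)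
      ∈ HAb 0 0 2)
    (hm4 : (AbB 0 0 2).mkQ ((Finsupp.single (RB.C 0) (1 : ℂ), 0) : AbSpace)
      ∈ HAb 0 0 2) :
    (Module.finrank ℂ ↥(HAb 0 0 1) = 2
      ∧ Submodule.span ℂ
          {(⟨(AbB 0 0 1).mkQ ((Finsupp.single (RB.A 0 0) (1 : ℂ), 0) : AbSpace),
              hm1⟩ : ↥(HAb 0 0 1)),
           (⟨(AbB 0 0 1).mkQ ((Finsupp.single (RB.A 0 1) (1 : ℂ), 0) : AbSpace),
              hm2⟩ : ↥(HAb 0 0 1))} = ⊤)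
    ∧ (Module.finrank ℂ ↥(HAb 0 0 2) = 2
      ∧ Submodule.span ℂ
          {(⟨(AbB 0 0 2).mkQ ((Finsupp.single (RB.B 0) (1 : ℂ), 0) : AbSpace),
              hm3⟩ : ↥(HAb 0 0 2)),
           (⟨(AbB 0 0 2).mkQ ((Finsupp.single (RB.C 0) (1 : ℂ), 0) : AbSpace),
              hm4⟩ : ↥(HAb 0 0 2))} = ⊤)
    ∧ (∀ g : ℤ, g ∉ ({1, 2} : Set ℤ) → HAb 0 0 g = ⊥) := by
  refine ⟨?_, ?_, fun _ hg => HAb_zero_eq_bot hg⟩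
  · exact finrank_eq_two_and_span_subtype_eq_top
      (linearIndependent_HAb_zero_pair (by norm_num) (by simp))
      (HAb_zero_eq_span_pair RB.setOf_deg_eq_one) hm1 hm2
  · exact finrank_eq_two_and_span_subtype_eq_top (linearIndependent_HAb_zero_pair le_rfl (by simp))
      (HAb_zero_eq_span_pair RB.setOf_deg_eq_two) hm3 hm4
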